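/- Let φ_λ : ℝⁿ × ℝ → ℝⁿ, λ ∈ [0,1], be a parametrized family of dissipative flows, K_0 the global attractor of φ_0, and (K_λ)_{λ∈[0,λ₁]} a continuation of K_0 with each K_λ (λ > 0) an attractor of φ_λ. Then there exists λ₀ > 0 such that for every λ with 0 < λ < λ₀ the set K_λ is cellular: it has a neighborhood basis in ℝⁿ consisting of sets homeomorphic to the closed unit ball of ℝⁿ (obtained as images φ_λ(B,t) of a fixed closed ball B ⊃ K_λ contained in A_λ(K_λ)). -/

import Mathlib

open Set Metric Filter Topology Bornology

section Defs

variable {M : Type*} [TopologicalSpace M]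

/-- A (continuous) flow on a topological space. -/
def IsFlow (φ : M → ℝ → M) : Prop :=
  Continuous (fun p : M × ℝ => φ p.1 p.2) ∧
    (∀ x, φ x 0 = x) ∧ ∀ x s t, φ (φ x s) t = φ x (s + t)

/-- A set `S` is invariant for the flow `φ` if `φ(S,t) = S` for every `t`. -/
def FlowInvariant (φ : M → ℝ → M) (S : Set M) : Prop :=
  ∀ t : ℝ, (fun x => φ x t) '' S = S

/-- The omega-limit set `ω(x) = ⋂_{t>0} cl (φ(x,[t,∞)))`. -/
def omegaLimitSet (φ : M → ℝ → M) (x : M) : Set M :=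
  ⋂ t ∈ Ioi (0 : ℝ), closure (φ x '' Ici t)

/-- The negative omega-limit set `ω*(x) = ⋂_{t<0} cl (φ(x,(-∞,t]))`. -/
def negOmegaLimitSet (φ : M → ℝ → M) (x : M) : Set M :=
  ⋂ t ∈ Iio (0 : ℝ), closure (φ x '' Iic t)

/-- A flow is dissipative if every omega-limit set is nonempty and the closure of the
union of all omega-limit sets is compact. -/
def Dissipative (φ : M → ℝ → M) : Prop :=
  (∀ x, (omegaLimitSet φ x).Nonempty) ∧
    IsCompact (closure (⋃ x, omegaLimitSet φ x))

/-- `K` is stable: every neighborhood `U` of `K` contains a neighborhood `V` of `K`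
with `φ(V,[0,∞)) ⊆ U`. -/
def FlowStable (φ : M → ℝ → M) (K : Set M) : Prop :=
  ∀ U ∈ nhdsSet K, ∃ V ∈ nhdsSet K, ∀ x ∈ V, ∀ t : ℝ, 0 ≤ t → φ x t ∈ U

/-- `K` is negatively stable: every neighborhood `U` of `K` contains a neighborhood `V`
of `K` with `φ(V,(-∞,0]) ⊆ U`. -/
def FlowNegStable (φ : M → ℝ → M) (K : Set M) : Prop :=
  ∀ U ∈ nhdsSet K, ∃ V ∈ nhdsSet K, ∀ x ∈ V, ∀ t : ℝ, t ≤ 0 → φ x t ∈ U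

/-- The region of attraction `A(K) = {x : ∅ ≠ ω(x) ⊆ K}`. -/
def attractionRegion (φ : M → ℝ → M) (K : Set M) : Set M :=
  {x | (omegaLimitSet φ x).Nonempty ∧ omegaLimitSet φ x ⊆ K}

/-- The region of repulsion `R(K) = {x : ∅ ≠ ω*(x) ⊆ K}`. -/
def repulsionRegion (φ : M → ℝ → M) (K : Set M) : Set M :=
  {x | (negOmegaLimitSet φ x).Nonempty ∧ negOmegaLimitSet φ x ⊆ K}

/-- An attractor: a compact invariant stable set which is attracting, i.e. its region of
attraction is a neighborhood of it. -/
def IsAttractor (φ : M → ℝ → M) (K : Set M) : Prop :=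
  IsCompact K ∧ FlowInvariant φ K ∧ FlowStable φ K ∧
    attractionRegion φ K ∈ nhdsSet K

/-- A repeller: a compact invariant negatively stable set which is repelling. -/
def IsRepeller (φ : M → ℝ → M) (K : Set M) : Prop :=
  IsCompact K ∧ FlowInvariant φ K ∧ FlowNegStable φ K ∧
    repulsionRegion φ K ∈ nhdsSet K

/-- A global attractor: a compact invariant stable set whose region of attraction is the
whole space. -/
def IsGlobalAttractor (φ : M → ℝ → M) (K : Set M) : Prop :=
  IsCompact K ∧ FlowInvariant φ K ∧ FlowStable φ K ∧
    attractionRegion φ K = univ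

/-- `N` is an isolating neighborhood of `K`: a compact neighborhood of `K` such that `K`
is the maximal invariant set contained in `N`. -/
def IsIsolatingNbhd (φ : M → ℝ → M) (N K : Set M) : Prop :=
  IsCompact N ∧ K ⊆ interior N ∧ FlowInvariant φ K ∧
    ∀ S : Set M, FlowInvariant φ S → S ⊆ N → S ⊆ K

/-- An isolated invariant set: a compact invariant set having an isolating neighborhood. -/
def IsIsolatedInvariant (φ : M → ℝ → M) (K : Set M) : Prop :=
  IsCompact K ∧ FlowInvariant φ K ∧ ∃ N, IsIsolatingNbhd φ N K

/-- A parametrized family of flows `(φ_λ)_{λ ∈ [0,1]}`: jointly continuous on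
`[0,1] × M × ℝ` and each `φ_λ` is a flow. -/
def IsParamFlow (φ : ℝ → M → ℝ → M) : Prop :=
  ContinuousOn (fun p : ℝ × M × ℝ => φ p.1 p.2.1 p.2.2)
      ((Icc 0 1 : Set ℝ) ×ˢ (univ : Set (M × ℝ))) ∧
    ∀ l ∈ Icc (0 : ℝ) 1, IsFlow (φ l)

/-- `(K_λ)_{λ ∈ J}` is a continuation: each `K_λ` is an isolated invariant set of `φ_λ`
and every isolating neighborhood of `K_{λ₀}` remains an isolating neighborhood of `K_λ`
for `λ` near `λ₀` in `J`. -/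
def IsContinuation (φ : ℝ → M → ℝ → M) (J : Set ℝ) (K : ℝ → Set M) : Prop :=
  (∀ l ∈ J, IsIsolatedInvariant (φ l) (K l)) ∧
    ∀ l₀ ∈ J, ∀ N : Set M, IsIsolatingNbhd (φ l₀) N (K l₀) →
      ∃ δ > 0, ∀ l ∈ J, |l - l₀| < δ → IsIsolatingNbhd (φ l) N (K l)

/-- The family `(φ_λ)` is uniformly dissipative. -/
def UniformlyDissipative (φ : ℝ → M → ℝ → M) : Prop :=
  (∀ l ∈ Icc (0 : ℝ) 1, ∀ x, (omegaLimitSet (φ l) x).Nonempty) ∧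
    IsCompact (closure (⋃ l ∈ Icc (0 : ℝ) 1, ⋃ x, omegaLimitSet (φ l) x))

end Defs

section NormedDefs

variable {E : Type*} [NormedAddCommGroup E]

/-- A coercive family of dissipative flows: for every continuation of the global
attractor of `φ₀`, the regions of attraction are bounded for all small `λ > 0`. -/
def CoerciveFamily (φ : ℝ → E → ℝ → E) : Prop :=
  ∀ lam1 ∈ Ioc (0 : ℝ) 1, ∀ K : ℝ → Set E,
    IsContinuation φ (Icc 0 lam1) K → IsGlobalAttractor (φ 0) (K 0) →
      ∃ lam0, 0 < lam0 ∧ lam0 ≤ lam1 ∧ ∀ l, 0 < l → l < lam0 →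
        IsBounded (attractionRegion (φ l) (K l))

/-- A polar family of dissipative flows: it has arbitrarily large bounded trajectories. -/
def PolarFamily (φ : ℝ → E → ℝ → E) : Prop :=
  ∀ L > 0, ∃ lam0 > 0, ∀ l, 0 < l → l < lam0 → l ≤ 1 →
    ∃ x : E, IsBounded (range (φ l x)) ∧
      ∃ tl < (0 : ℝ), ∀ t < tl, L < ‖φ l x t‖

/-- The set of points whose trajectory tends to infinity in negative time
(the region of repulsion of the point at infinity). -/
def escapeRegion (φ : ℝ → E → ℝ → E) (l : ℝ) : Set E :=
  {x | Tendsto (fun t => ‖φ l x t‖) atBot atTop}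

/-- The complementary isolated invariant set
`C_λ = ℝⁿ ∖ (A_λ(K_λ) ∪ R_λ(∞))`. -/
def complementarySet (φ : ℝ → E → ℝ → E) (K : ℝ → Set E) (l : ℝ) : Set E :=
  (attractionRegion (φ l) (K l) ∪ escapeRegion φ l)ᶜ

end NormedDefs

/-! At `λ = 0` the global attractor `K₀` is stable, so a compact neighbourhood `C` of `K₀` is
carried into its own interior at some time `T > 0` without its orbit leaving an isolating
neighbourhood `N`, and a large closed ball `B ⊇ N` is carried into `C`. These are open conditions
on compact sets of (point, time) pairs, so they persist for small `λ`. Then every `φ_λ`-orbit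
starting in `B` eventually stays in the compact set `N`, so its ω-limit set is a nonempty invariant
subset of `N`, hence of `K_λ`: the ball `B` lies in `A_λ(K_λ)`. Since `K_λ` is stable it attracts
the compact ball `B` uniformly, and the images `φ_λ(B, t)` are homeomorphic to `B` and shrink into
any neighbourhood of `K_λ`. -/

theorem IsCompact.eventually_forall_mem_of_forall_eventually_prod {X Y : Type*}
    [TopologicalSpace Y] {l : Filter X} {K : Set Y} (hK : IsCompact K) {P : X → Y → Prop}
    (hP : ∀ y ∈ K, ∀ᶠ z in l ×ˢ 𝓝 y, P z.1 z.2) : ∀ᶠ x in l, ∀ y ∈ K, P x y :=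
  Eventually.curry (la := l) (hK.mem_prod_nhdsSet_of_forall hP) |>.mono fun _ h =>
    h.self_of_nhdsSet

theorem nonempty_closedBall_homeomorph_unitClosedBall {E : Type*} [NormedAddCommGroup E]
    [NormedSpace ℝ E] (c : E) {r : ℝ} (hr : 0 < r) :
    Nonempty (closedBall c r ≃ₜ closedBall (0 : E) 1) := by
  obtain ⟨h, -, hcl, -⟩ := exists_homeomorph_image_interior_closure_frontier_eq_unitBall
    (convex_closedBall c r) ⟨c, mem_interior_iff_mem_nhds.2 (closedBall_mem_nhds c hr)⟩
    isBounded_closedBall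
  rw [closure_closedBall] at hcl
  exact ⟨(h.image _).trans (.setCongr hcl)⟩

section Flows

variable {M : Type*} [TopologicalSpace M] {ψ : M → ℝ → M} {K N : Set M}

def IsFlow.toFlow (h : IsFlow ψ) : Flow ℝ M where
  toFun t x := ψ x t
  cont' := h.1.comp continuous_swap
  map_add' t₁ t₂ x := by rw [h.2.2, add_comm]
  map_zero' := h.2.1

theorem omegaLimitSet_eq_omegaLimit (ψ : M → ℝ → M) (x : M) :
    omegaLimitSet ψ x = omegaLimit atTop (fun t y => ψ y t) {x} := by
  have hbasis : (atTop : Filter ℝ).HasBasis (fun t => t ∈ Ioi 0) Ici :=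
    (atTop_basis' 1).to_hasBasis (fun t ht => ⟨t, one_pos.trans_le ht, le_rfl⟩)
      fun t _ => ⟨max t 1, le_max_right t 1, Ici_subset_Ici.2 (le_max_left t 1)⟩
  simp only [omegaLimit, image2_singleton_right]
  exact (hbasis.biInter_mem fun _ _ h => closure_mono (image_mono h)).symm

namespace IsFlow

theorem flowInvariant_of_isInvariant (h : IsFlow ψ) {S : Set M} (hS : IsInvariant h.toFlow S) :
    FlowInvariant ψ S := by
  intro t
  refine (hS t).image_subset.antisymm fun y hy => ⟨ψ y (-t), hS (-t) hy, ?_⟩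
  show ψ (ψ y (-t)) t = y
  rw [h.2.2, neg_add_cancel, h.2.1]

theorem flowInvariant_omegaLimitSet (h : IsFlow ψ) (x : M) :
    FlowInvariant ψ (omegaLimitSet ψ x) := by
  rw [omegaLimitSet_eq_omegaLimit]
  exact h.flowInvariant_of_isInvariant <|
    h.toFlow.isInvariant_omegaLimit atTop {x} fun t => tendsto_atTop_add_const_left _ t tendsto_id

end IsFlow

theorem frequently_mem_of_mem_attractionRegion {x : M} (hx : x ∈ attractionRegion ψ K)
    {U : Set M} (hU : U ∈ 𝓝ˢ K) : ∃ᶠ t in atTop, ψ x t ∈ U := by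
  obtain ⟨⟨y, hy⟩, hωK⟩ := hx
  have hyK := hωK hy
  rw [omegaLimitSet_eq_omegaLimit, mem_omegaLimit_singleton_iff_mapClusterPt] at hy
  exact mapClusterPt_iff_frequently.1 hy U (nhds_le_nhdsSet hyK hU)

theorem FlowStable.eventually_forall_mem (hψ : IsFlow ψ) (hst : FlowStable ψ K) {B : Set M}
    (hB : IsCompact B) (hBA : B ⊆ attractionRegion ψ K) {U : Set M} (hU : U ∈ 𝓝ˢ K) :
    ∀ᶠ t in atTop, ∀ x ∈ B, ψ x t ∈ U := by
  obtain ⟨V, hV, hVU⟩ := hst U hU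
  refine hB.eventually_forall_mem_of_forall_eventually_prod fun x hx => ?_
  obtain ⟨t₀, ht₀⟩ := (frequently_mem_of_mem_attractionRegion (hBA hx)
    (isOpen_interior.mem_nhdsSet.2 (subset_interior_iff_mem_nhdsSet.2 hV))).exists
  have hnear : ∀ᶠ y in 𝓝 x, ψ y t₀ ∈ interior V :=
    (hψ.toFlow.continuous_toFun t₀).continuousAt.preimage_mem_nhds
      (isOpen_interior.mem_nhds ht₀)
  filter_upwards [(eventually_ge_atTop t₀).prod_mk hnear] with ⟨t, y⟩ ⟨ht, hy⟩
  have := hVU _ (interior_subset hy) (t - t₀) (sub_nonneg.2 ht)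
  rwa [hψ.2.2, add_sub_cancel] at this

theorem IsFlow.mem_of_periodic_return (hψ : IsFlow ψ) {C : Set M} {T : ℝ} (hT : 0 < T)
    (hCN : ∀ y ∈ C, ∀ s ∈ Icc 0 T, ψ y s ∈ N) (hCC : ∀ y ∈ C, ψ y T ∈ C) {y : M} (hy : y ∈ C)
    {s : ℝ} (hs : 0 ≤ s) : ψ y s ∈ N := by
  obtain ⟨k, hk⟩ := Archimedean.arch s hT
  rw [nsmul_eq_mul] at hk
  induction k generalizing y s with
  | zero => exact hCN y hy s ⟨hs, by simp only [Nat.cast_zero, zero_mul] at hk; linarith⟩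
  | succ k ih =>
    rcases le_total s T with hsT | hTs
    · exact hCN y hy s ⟨hs, hsT⟩
    · have := ih (hCC y hy) (sub_nonneg.2 hTs) (by push_cast at hk; linarith)
      rwa [hψ.2.2, add_sub_cancel] at this

namespace IsIsolatingNbhd

variable [T2Space M]

theorem mem_attractionRegion (hψ : IsFlow ψ) (hN : IsIsolatingNbhd ψ N K) {x : M}
    (hx : ∀ᶠ t in atTop, ψ x t ∈ N) : x ∈ attractionRegion ψ K := by
  obtain ⟨T, hT⟩ := eventually_atTop.1 hx
  have habs : closure (image2 (fun t y => ψ y t) (Ici T) {x}) ⊆ N :=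
    hN.1.isClosed.closure_subset_iff.2 (by rintro _ ⟨t, ht, _, rfl, rfl⟩; exact hT t ht)
  refine ⟨?_, hN.2.2.2 _ (hψ.flowInvariant_omegaLimitSet x) ?_⟩ <;>
    rw [omegaLimitSet_eq_omegaLimit]
  · exact nonempty_omegaLimit_of_isCompact_absorbing _ _ _ hN.1 ⟨Ici T, Ici_mem_atTop T, habs⟩
      (singleton_nonempty x)
  · exact (omegaLimit_subset_closure_image2 _ _ _ (Ici_mem_atTop T)).trans habs

theorem subset_attractionRegion (hψ : IsFlow ψ) (hN : IsIsolatingNbhd ψ N K) {C B : Set M}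
    {T T₁ : ℝ} (hT : 0 < T) (hCN : ∀ y ∈ C, ∀ s ∈ Icc 0 T, ψ y s ∈ N)
    (hCC : ∀ y ∈ C, ψ y T ∈ C) (hBC : ∀ x ∈ B, ψ x T₁ ∈ C) :
    B ⊆ attractionRegion ψ K := fun x hx =>
  hN.mem_attractionRegion hψ <| eventually_atTop.2 ⟨T₁, fun t ht => by
    have := hψ.mem_of_periodic_return hT hCN hCC (hBC x hx) (sub_nonneg.2 ht)
    rwa [hψ.2.2, add_sub_cancel] at this⟩

end IsIsolatingNbhd

end Flows

section Families

variable {M : Type*} [TopologicalSpace M] {φ : ℝ → M → ℝ → M}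

theorem IsContinuation.eventually_isIsolatingNbhd {J : Set ℝ} {K : ℝ → Set M}
    (h : IsContinuation φ J K) {l₀ : ℝ} (hl₀ : l₀ ∈ J) {N : Set M}
    (hN : IsIsolatingNbhd (φ l₀) N (K l₀)) :
    ∀ᶠ l in 𝓝[J] l₀, IsIsolatingNbhd (φ l) N (K l) := by
  obtain ⟨δ, hδ, hNδ⟩ := h.2 l₀ hl₀ N hN
  exact eventually_nhdsWithin_iff.2 <| Metric.eventually_nhds_iff.2
    ⟨δ, hδ, fun l hl hlJ => hNδ l hlJ (by rwa [Real.dist_eq] at hl)⟩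

namespace IsParamFlow

theorem eventually_forall_mem (hφ : IsParamFlow φ) {l₀ : ℝ} (hl₀ : l₀ ∈ Icc (0 : ℝ) 1)
    {C : Set (M × ℝ)} (hC : IsCompact C) {O : Set M} (hO : IsOpen O)
    (h : ∀ p ∈ C, φ l₀ p.1 p.2 ∈ O) : ∀ᶠ l in 𝓝[Icc 0 1] l₀, ∀ p ∈ C, φ l p.1 p.2 ∈ O := by
  refine hC.eventually_forall_mem_of_forall_eventually_prod fun p hp => ?_
  have := hφ.1 (l₀, p) ⟨hl₀, mem_univ p⟩ (hO.mem_nhds (h p hp))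
  rwa [nhdsWithin_prod_eq, nhdsWithin_univ] at this

theorem eventually_subset_attractionRegion [T2Space M] [LocallyCompactSpace M]
    (hφ : IsParamFlow φ) {l₀ : ℝ} (hl₀ : l₀ ∈ Icc (0 : ℝ) 1) {K₀ N B : Set M}
    (hK₀ : IsCompact K₀) (hst : FlowStable (φ l₀) K₀) (hA : attractionRegion (φ l₀) K₀ ∈ 𝓝ˢ K₀)
    (hKN : K₀ ⊆ interior N) (hB : IsCompact B) (hBA : B ⊆ attractionRegion (φ l₀) K₀) :
    ∀ᶠ l in 𝓝[Icc 0 1] l₀, ∀ K : Set M, IsIsolatingNbhd (φ l) N K →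
      B ⊆ attractionRegion (φ l) K := by
  have hψ := hφ.2 l₀ hl₀
  obtain ⟨V, hV, hVN⟩ := hst _ (isOpen_interior.mem_nhdsSet.2 hKN)
  obtain ⟨C, hC, hKC, hCV⟩ := exists_compact_between hK₀ isOpen_interior
    (subset_interior_iff_mem_nhdsSet.2 (inter_mem hV hA))
  have hCnhds : interior C ∈ 𝓝ˢ K₀ := isOpen_interior.mem_nhdsSet.2 hKC
  have hCA : C ⊆ attractionRegion (φ l₀) K₀ := fun y hy => (interior_subset (hCV hy)).2
  obtain ⟨T, hCT, hT⟩ :=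
    ((hst.eventually_forall_mem hψ hC hCA hCnhds).and (eventually_gt_atTop 0)).exists
  obtain ⟨T₁, hBT₁⟩ := (hst.eventually_forall_mem hψ hB hBA hCnhds).exists
  have hstay := hφ.eventually_forall_mem hl₀ (hC.prod (isCompact_Icc (a := 0) (b := T)))
    isOpen_interior
    fun p hp => hVN p.1 (interior_subset (hCV hp.1)).1 p.2 hp.2.1
  have hreturn := hφ.eventually_forall_mem hl₀ (hC.prod isCompact_singleton) isOpen_interior
    fun p hp => (hp.2 : p.2 = T) ▸ hCT p.1 hp.1
  have henter := hφ.eventually_forall_mem hl₀ (hB.prod isCompact_singleton) isOpen_interior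
    fun p hp => (hp.2 : p.2 = T₁) ▸ hBT₁ p.1 hp.1
  filter_upwards [self_mem_nhdsWithin, hstay, hreturn, henter] with l hl hstay hreturn henter K hN
  exact hN.subset_attractionRegion (hφ.2 l hl) hT
    (fun y hy s hs => interior_subset (hstay (y, s) ⟨hy, hs⟩))
    (fun y hy => interior_subset (hreturn (y, T) ⟨hy, rfl⟩))
    (fun x hx => interior_subset (henter (x, T₁) ⟨hx, rfl⟩))

end IsParamFlow

end Families

theorem IsFlow.cellular_of_closedBall_subset_attractionRegion {E : Type*} [NormedAddCommGroup E]
    [NormedSpace ℝ E] [ProperSpace E] {ψ : E → ℝ → E} {K : Set E} {c : E} {r : ℝ}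
    (hψ : IsFlow ψ) (hst : FlowStable ψ K) (hinv : FlowInvariant ψ K) (hr : 0 < r)
    (hK : K ⊆ ball c r) (hBA : closedBall c r ⊆ attractionRegion ψ K) :
    ∀ U ∈ 𝓝ˢ K, ∃ t : ℝ,
      (fun x => ψ x t) '' closedBall c r ⊆ U ∧
      K ⊆ interior ((fun x => ψ x t) '' closedBall c r) ∧
      Nonempty ((↥((fun x => ψ x t) '' closedBall c r)) ≃ₜ (↥(closedBall (0 : E) 1))) := by
  intro U hU
  obtain ⟨t, ht⟩ := (hst.eventually_forall_mem hψ (isCompact_closedBall c r) hBA hU).exists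
  let e := hψ.toFlow.toHomeomorph t
  obtain ⟨g⟩ := nonempty_closedBall_homeomorph_unitClosedBall c hr
  refine ⟨t, image_subset_iff.2 ht, ?_, ⟨(e.image _).symm.trans g⟩⟩
  calc K = e '' K := (hinv t).symm
    _ ⊆ e '' ball c r := image_mono hK
    _ ⊆ interior (e '' closedBall c r) :=
      interior_maximal (image_mono ball_subset_closedBall) (e.isOpenMap _ isOpen_ball)

theorem continuation_attractor_cellular_general {n : ℕ}
    (φ : ℝ → EuclideanSpace ℝ (Fin n) → ℝ → EuclideanSpace ℝ (Fin n))
    (hφ : IsParamFlow φ)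
    (lam1 : ℝ) (hlam1 : lam1 ∈ Ioc (0 : ℝ) 1)
    (K : ℝ → Set (EuclideanSpace ℝ (Fin n)))
    (hcont : IsContinuation φ (Icc 0 lam1) K)
    (hK0 : IsGlobalAttractor (φ 0) (K 0))
    (hattr : ∀ l ∈ Ioc (0 : ℝ) lam1, IsAttractor (φ l) (K l)) :
    ∃ lam0, 0 < lam0 ∧ lam0 ≤ lam1 ∧ ∀ l, 0 < l → l < lam0 →
      ∃ c : EuclideanSpace ℝ (Fin n), ∃ r > 0,
        K l ⊆ ball c r ∧ closedBall c r ⊆ attractionRegion (φ l) (K l) ∧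
        ∀ U ∈ nhdsSet (K l), ∃ t : ℝ,
          (fun x => φ l x t) '' closedBall c r ⊆ U ∧
          K l ⊆ interior ((fun x => φ l x t) '' closedBall c r) ∧
          Nonempty ((↥((fun x => φ l x t) '' closedBall c r)) ≃ₜ
            (↥(closedBall (0 : EuclideanSpace ℝ (Fin n)) 1))) := by
  obtain ⟨hlam1pos, hlam11⟩ := hlam1
  have h0 : (0 : ℝ) ∈ Icc 0 lam1 := ⟨le_rfl, hlam1pos.le⟩
  obtain ⟨hK0c, -, hK0st, hK0A⟩ := hK0
  obtain ⟨N, hN⟩ := (hcont.1 0 h0).2.2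
  obtain ⟨r, hr, hNr⟩ := hN.1.isBounded.subset_ball_lt 0 0
  have hisol := hcont.eventually_isIsolatingNbhd h0 hN
  have hball := hφ.eventually_subset_attractionRegion ⟨le_rfl, zero_le_one⟩ hK0c hK0st
    (by simp [hK0A]) hN.2.1 (isCompact_closedBall 0 r) (by simp [hK0A])
  obtain ⟨lam0, hlam0, hsmall⟩ := mem_nhdsGT_iff_exists_Ioo_subset.1 <|
    Eventually.and (nhdsWithin_le_of_mem (Icc_mem_nhdsGT hlam1pos) hisol)
      (nhdsWithin_le_of_mem (Icc_mem_nhdsGT one_pos) hball)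
  refine ⟨min lam0 lam1, lt_min hlam0 hlam1pos, min_le_right _ _, fun l hl0 hl => ?_⟩
  have hlI : l ∈ Ioc 0 lam1 := ⟨hl0, hl.le.trans (min_le_right _ _)⟩
  obtain ⟨hNl, hBl⟩ := hsmall ⟨hl0, hl.trans_le (min_le_left _ _)⟩
  obtain ⟨-, hinv, hst, -⟩ := hattr l hlI
  have hKr : K l ⊆ ball 0 r := hNl.2.1.trans (interior_subset.trans hNr)
  have hflow : IsFlow (φ l) := hφ.2 l ⟨hl0.le, hlI.2.trans hlam11⟩
  exact ⟨0, r, hr, hKr, hBl _ hNl,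
    hflow.cellular_of_closedBall_subset_attractionRegion hst hinv hr hKr (hBl _ hNl)⟩

/-- For a parametrized family of dissipative flows on `ℝⁿ` and a
continuation `(K_λ)` of the global attractor `K₀` by attractors, for all small `λ > 0`
the set `K_λ` is cellular: it has a neighborhood basis consisting of sets homeomorphic
to the closed unit ball, obtained as images `φ_λ(B,t)` of a fixed closed ball
`B ⊇ K_λ` contained in `A_λ(K_λ)`. -/
theorem continuation_attractor_cellular {n : ℕ}
    (φ : ℝ → EuclideanSpace ℝ (Fin n) → ℝ → EuclideanSpace ℝ (Fin n))
    (hφ : IsParamFlow φ)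
    (hdiss : ∀ l ∈ Icc (0 : ℝ) 1, Dissipative (φ l))
    (lam1 : ℝ) (hlam1 : lam1 ∈ Ioc (0 : ℝ) 1)
    (K : ℝ → Set (EuclideanSpace ℝ (Fin n)))
    (hcont : IsContinuation φ (Icc 0 lam1) K)
    (hK0 : IsGlobalAttractor (φ 0) (K 0))
    (hattr : ∀ l ∈ Ioc (0 : ℝ) lam1, IsAttractor (φ l) (K l)) :
    ∃ lam0, 0 < lam0 ∧ lam0 ≤ lam1 ∧ ∀ l, 0 < l → l < lam0 →
      ∃ c : EuclideanSpace ℝ (Fin n), ∃ r > 0,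
        K l ⊆ ball c r ∧ closedBall c r ⊆ attractionRegion (φ l) (K l) ∧
        ∀ U ∈ nhdsSet (K l), ∃ t : ℝ,
          (fun x => φ l x t) '' closedBall c r ⊆ U ∧
          K l ⊆ interior ((fun x => φ l x t) '' closedBall c r) ∧
          Nonempty ((↥((fun x => φ l x t) '' closedBall c r)) ≃ₜ
            (↥(closedBall (0 : EuclideanSpace ℝ (Fin n)) 1))) :=
  continuation_attractor_cellular_general φ hφ lam1 hlam1 K hcont hK0 hattr
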